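/- arXiv:1404.1199 — 6 statements merged into one kernel-verified Lean document; each statement's English description precedes it below -/
import Mathlib

section
/- Let n ≥ 2k ≥ 0 and let w be a permutation of {1,...,n}. Then w = w_{ℓ_1,...,ℓ_k} for some 1 ≤ ℓ_1 < ℓ_2 < ... < ℓ_k ≤ n if and only if the inverse permutation w^{-1} is strictly increasing on the set {1,2,...,n−k} and strictly increasing on the set {n−k+1,...,n}. -/
open scoped BigOperators

/-- The permutation `w_{ℓ₁,…,ℓₖ}` of `{1,…,n}` (as a function `ℕ → ℕ`):
`w i = n - k + j` if `i = ℓ j` for some `1 ≤ j ≤ k`, and `w i = i - j` if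
`ℓ j < i < ℓ (j+1)` (with conventions `ℓ 0 = 0`, `ℓ (k+1) = n+1`); here `j`
is recovered as the number of `r ∈ {1,…,k}` with `ℓ r ≤ i` (resp. `ℓ r < i`). -/
def wPerm (n k : ℕ) (ℓ : ℕ → ℕ) (i : ℕ) : ℕ :=
  if ∃ j ∈ Finset.Icc 1 k, ℓ j = i then
    n - k + ((Finset.Icc 1 k).filter fun j => ℓ j ≤ i).card
  else
    i - ((Finset.Icc 1 k).filter fun j => ℓ j < i).card

/-- The conditions `1 ≤ ℓ 1 < ℓ 2 < ⋯ < ℓ k ≤ n`. -/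
def goodL (n k : ℕ) (ℓ : ℕ → ℕ) : Prop :=
  (∀ j ∈ Finset.Icc 1 k, 1 ≤ ℓ j ∧ ℓ j ≤ n) ∧
    ∀ j j' : ℕ, 1 ≤ j → j < j' → j' ≤ k → ℓ j < ℓ j'

/-! The inverse `v` of `w_ℓ` sends `n - k + j` to `ℓ j` and enumerates the complement of
`{ℓ 1, …, ℓ k}` on `{1, …, n - k}`. A function `f` on `{1, …, m}` is strictly increasing iff
every `a` equals its rank `#{b | f b ≤ f a}`. For a bijection `v` of `{1, …, n}` every `i ≤ n`
equals `#{b | v b ≤ i}`; splitting this count at `n - k` shows that, away from the `ℓ j`, the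
formula `w i = i - #{j | ℓ j < i}` says exactly that `w i` is the rank of `i` under `v` on
`{1, …, n - k}`. -/

open Finset

theorem strictMonoOn_Icc_iff_card_filter_le {α : Type*} [LinearOrder α] {m : ℕ} {f : ℕ → α} :
    StrictMonoOn f (Set.Icc 1 m) ↔ ∀ a ∈ Icc 1 m, #{b ∈ Icc 1 m | f b ≤ f a} = a := by
  constructor
  · intro hf a ha
    have : {b ∈ Icc 1 m | f b ≤ f a} = Icc 1 a := by
      ext b
      simp only [mem_filter, mem_Icc] at ha ⊢
      constructor
      · rintro ⟨hb, hba⟩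
        exact ⟨hb.1, (hf.le_iff_le hb ha).1 hba⟩
      · rintro ⟨hb1, hba⟩
        exact ⟨⟨hb1, hba.trans ha.2⟩, (hf.le_iff_le ⟨hb1, hba.trans ha.2⟩ ha).2 hba⟩
    rw [this, Nat.card_Icc, Nat.add_sub_cancel]
  · intro hrank a ha b hb hab
    by_contra! hba
    have hsub : {c ∈ Icc 1 m | f c ≤ f b} ⊆ {c ∈ Icc 1 m | f c ≤ f a} :=
      fun c hc => by simp only [mem_filter] at hc ⊢; exact ⟨hc.1, hc.2.trans hba⟩
    have hcard := card_le_card hsub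
    rw [hrank b (by simpa using hb), hrank a (by simpa using ha)] at hcard
    omega

theorem card_filter_Icc_add (p : ℕ → Prop) [DecidablePred p] (m k : ℕ) :
    #{b ∈ Icc 1 (m + k) | p b} = #{b ∈ Icc 1 m | p b} + #{r ∈ Icc 1 k | p (m + r)} := by
  induction k with
  | zero => simp
  | succ k ih =>
    rw [← add_assoc, ← insert_Icc_right_eq_Icc_add_one (by omega),
      ← insert_Icc_right_eq_Icc_add_one (by omega), filter_insert, filter_insert]
    split_ifs <;> simp_all [add_assoc]

theorem card_filter_le_of_bijOn {n : ℕ} {v : ℕ → ℕ} (hv : Set.BijOn v (Set.Icc 1 n) (Set.Icc 1 n))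
    {i : ℕ} (hi : i ≤ n) : #{b ∈ Icc 1 n | v b ≤ i} = i := by
  have : #{b ∈ Icc 1 n | v b ≤ i} = #(Icc 1 i) := by
    refine card_nbij v (fun b hb => ?_) (hv.injOn.mono fun b hb => ?_) (fun c hc => ?_)
    · simp only [coe_filter, mem_Icc, Set.mem_ofPred_eq] at hb
      simpa using ⟨(hv.mapsTo hb.1).1, hb.2⟩
    · simp only [coe_filter, mem_Icc, Set.mem_ofPred_eq] at hb
      exact hb.1
    · simp only [coe_Icc, Set.mem_Icc] at hc
      obtain ⟨b, hb, rfl⟩ := hv.surjOn ⟨hc.1, hc.2.trans hi⟩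
      exact ⟨b, by simpa using ⟨hb, hc.2⟩, rfl⟩
  rw [this, Nat.card_Icc, Nat.add_sub_cancel]

theorem goodL_iff {n k : ℕ} {ℓ : ℕ → ℕ} :
    goodL n k ℓ ↔ Set.MapsTo ℓ (Set.Icc 1 k) (Set.Icc 1 n) ∧ StrictMonoOn ℓ (Set.Icc 1 k) := by
  simp only [goodL, Set.MapsTo, StrictMonoOn, mem_Icc, Set.mem_Icc]
  constructor
  · rintro ⟨hmem, hmono⟩
    exact ⟨hmem, fun j hj j' hj' hjj' => hmono j j' hj.1 hjj' hj'.2⟩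
  · rintro ⟨hmem, hmono⟩
    exact ⟨hmem, fun j j' hj hjj' hj' => hmono ⟨hj, by omega⟩ ⟨by omega, hj'⟩ hjj'⟩

theorem strictMonoOn_comp_add_iff {α : Type*} [Preorder α] {f : ℕ → α} {m k : ℕ} :
    StrictMonoOn (fun r => f (m + r)) (Set.Icc 1 k) ↔ StrictMonoOn f (Set.Icc (m + 1) (m + k)) := by
  constructor
  · intro hf a ha b hb hab
    obtain ⟨a, rfl⟩ := Nat.exists_eq_add_of_le (show m ≤ a by grind)
    obtain ⟨b, rfl⟩ := Nat.exists_eq_add_of_le (show m ≤ b by grind)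
    exact hf (by grind) (by grind) (by omega)
  · intro hf a ha b hb hab
    exact hf (by grind) (by grind) (by omega)

theorem wPerm_apply_of_mem {n k : ℕ} {ℓ : ℕ → ℕ} (hℓ : StrictMonoOn ℓ (Set.Icc 1 k)) {j : ℕ}
    (hj : j ∈ Icc 1 k) : wPerm n k ℓ (ℓ j) = n - k + j := by
  rw [wPerm, if_pos ⟨j, hj, rfl⟩, strictMonoOn_Icc_iff_card_filter_le.1 hℓ j hj]

theorem wPerm_apply_of_not_mem {n k : ℕ} {ℓ : ℕ → ℕ} {i : ℕ} (hi : ∀ j ∈ Icc 1 k, ℓ j ≠ i) :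
    wPerm n k ℓ i = i - #{r ∈ Icc 1 k | ℓ r ≤ i} := by
  rw [wPerm, if_neg fun ⟨j, hj, he⟩ => hi j hj he]
  congr 2
  exact filter_congr fun r hr => by grind

theorem card_filter_le_add_card_filter_le {m k : ℕ} {v : ℕ → ℕ}
    (hv : Set.BijOn v (Set.Icc 1 (m + k)) (Set.Icc 1 (m + k))) {i : ℕ} (hi : i ≤ m + k) :
    #{b ∈ Icc 1 m | v b ≤ i} + #{r ∈ Icc 1 k | v (m + r) ≤ i} = i := by
  rw [← card_filter_Icc_add (v · ≤ i), card_filter_le_of_bijOn hv hi]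

section

variable {m k : ℕ} {w v : ℕ → ℕ}

theorem strictMonoOn_of_eq_wPerm (hw : Set.BijOn w (Set.Icc 1 (m + k)) (Set.Icc 1 (m + k)))
    (hinv : Set.InvOn v w (Set.Icc 1 (m + k)) (Set.Icc 1 (m + k))) {ℓ : ℕ → ℕ}
    (hℓ : goodL (m + k) k ℓ) (hwℓ : ∀ i ∈ Set.Icc 1 (m + k), w i = wPerm (m + k) k ℓ i) :
    StrictMonoOn v (Set.Icc 1 m) ∧ StrictMonoOn v (Set.Icc (m + 1) (m + k)) := by
  obtain ⟨hℓmaps, hℓmono⟩ := goodL_iff.1 hℓ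
  have hvbij := hw.symm hinv.symm
  have hwℓ_ell : ∀ j ∈ Icc 1 k, w (ℓ j) = m + j := fun j hj => by
    rw [hwℓ _ (hℓmaps (by simpa using hj)), wPerm_apply_of_mem hℓmono hj, Nat.add_sub_cancel]
  have hvℓ : ∀ j ∈ Icc 1 k, v (m + j) = ℓ j := fun j hj => by
    rw [← hwℓ_ell j hj, hinv.1 (hℓmaps (by simpa using hj))]
  refine ⟨strictMonoOn_Icc_iff_card_filter_le.2 fun a ha => ?_,
    strictMonoOn_comp_add_iff.1 (hℓmono.congr fun j hj => (hvℓ j (by simpa using hj)).symm)⟩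
  rw [mem_Icc] at ha
  have hva : v a ∈ Set.Icc 1 (m + k) := hvbij.mapsTo ⟨ha.1, by omega⟩
  have hwva : w (v a) = a := hinv.2 ⟨ha.1, by omega⟩
  have hva_ne : ∀ j ∈ Icc 1 k, ℓ j ≠ v a := fun j hj he => by
    have hwℓj := hwℓ_ell j hj
    rw [he, hwva] at hwℓj
    rw [mem_Icc] at hj
    omega
  have hsplit := card_filter_le_add_card_filter_le hvbij hva.2
  have hcount : #{r ∈ Icc 1 k | v (m + r) ≤ v a} = #{r ∈ Icc 1 k | ℓ r ≤ v a} :=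
    congrArg card (filter_congr fun r hr => by rw [hvℓ r hr])
  have ha_eq := hwℓ (v a) hva
  rw [hwva, wPerm_apply_of_not_mem hva_ne] at ha_eq
  omega

theorem exists_eq_wPerm_of_strictMonoOn (hw : Set.BijOn w (Set.Icc 1 (m + k)) (Set.Icc 1 (m + k)))
    (hinv : Set.InvOn v w (Set.Icc 1 (m + k)) (Set.Icc 1 (m + k)))
    (hlow : StrictMonoOn v (Set.Icc 1 m)) (hhigh : StrictMonoOn v (Set.Icc (m + 1) (m + k))) :
    ∃ ℓ : ℕ → ℕ, goodL (m + k) k ℓ ∧ ∀ i ∈ Set.Icc 1 (m + k), w i = wPerm (m + k) k ℓ i := by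
  have hvbij := hw.symm hinv.symm
  have hℓmono : StrictMonoOn (fun r => v (m + r)) (Set.Icc 1 k) := strictMonoOn_comp_add_iff.2 hhigh
  refine ⟨fun r => v (m + r),
    goodL_iff.2 ⟨fun r hr => hvbij.mapsTo ⟨by grind, by grind⟩, hℓmono⟩, fun i hi => ?_⟩
  have hwi := hw.mapsTo hi
  rw [Set.mem_Icc] at hwi
  by_cases hwi_low : w i ≤ m
  · have hi_ne : ∀ j ∈ Icc 1 k, v (m + j) ≠ i := fun j hj he => by
      have hwj := hinv.2 (show m + j ∈ Set.Icc 1 (m + k) by grind)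
      rw [he] at hwj
      grind
    have hrank := strictMonoOn_Icc_iff_card_filter_le.1 hlow (w i) (by simpa using ⟨hwi.1, hwi_low⟩)
    rw [hinv.1 hi] at hrank
    have hsplit := card_filter_le_add_card_filter_le hvbij hi.2
    rw [wPerm_apply_of_not_mem hi_ne]
    omega
  · have hj : w i - m ∈ Icc 1 k := by simp only [mem_Icc]; omega
    have hvj : v (m + (w i - m)) = i := by rw [Nat.add_sub_cancel' (by omega), hinv.1 hi]
    calc w i = m + k - k + (w i - m) := by omega
      _ = wPerm (m + k) k (fun r => v (m + r)) i := by
        rw [← wPerm_apply_of_mem hℓmono hj, hvj]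

end

theorem wPerm_iff_inverse_strictMono (n k : ℕ) (h : 2 * k ≤ n) (w v : ℕ → ℕ)
    (hw : Set.BijOn w (Set.Icc 1 n) (Set.Icc 1 n))
    (hv : ∀ i ∈ Set.Icc 1 n, v (w i) = i ∧ w (v i) = i) :
    (∃ ℓ : ℕ → ℕ, goodL n k ℓ ∧ ∀ i ∈ Set.Icc 1 n, w i = wPerm n k ℓ i) ↔
      (StrictMonoOn v (Set.Icc 1 (n - k)) ∧
        StrictMonoOn v (Set.Icc (n - k + 1) n)) := by
  obtain ⟨m, rfl⟩ : ∃ m, n = m + k := ⟨n - k, by omega⟩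
  have hinv : Set.InvOn v w (Set.Icc 1 (m + k)) (Set.Icc 1 (m + k)) :=
    ⟨fun i hi => (hv i hi).1, fun i hi => (hv i hi).2⟩
  rw [Nat.add_sub_cancel]
  exact ⟨fun ⟨_, hℓ, hwℓ⟩ => strictMonoOn_of_eq_wPerm hw hinv hℓ hwℓ,
    fun ⟨hlow, hhigh⟩ => exists_eq_wPerm_of_strictMonoOn hw hinv hlow hhigh⟩
end

section
/- (Lemma 2.1, linear-algebraic form.) Let n ≥ 2k ≥ 0, let e_1,...,e_n be the standard basis of ℂ^n, and let N : ℂ^n → ℂ^n be the linear map determined by N e_1 = 0, N e_{n−k+1} = 0, and N e_i = e_{i−1} for all other indices i. For a permutation w of {1,...,n}, set V_i = span_ℂ(e_{w(1)},...,e_{w(i)}) for 0 ≤ i ≤ n (so V_0 = 0). Then N V_i ⊆ V_{i−1} holds for all 1 ≤ i ≤ n if and only if w = w_{ℓ_1,...,ℓ_k} for some 1 ≤ ℓ_1 < ℓ_2 < ... < ℓ_k ≤ n. -/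
open scoped BigOperators

/-!
A basis vector `e_{w r}` with `N e_{w r} = e_{w s} ≠ 0` lies in `V_r`, so `N V_r ⊆ V_{r-1}` forces
`s < r`, and this is also sufficient. Since `N` shifts indices down inside each Jordan block, the
flag condition says exactly that `w⁻¹` is increasing on each block `{0, …, n-k-1}` and
`{n-k, …, n-1}`: `w` is a shuffle of the two blocks. A shuffle is determined by the positions
`ℓ₁ < ⋯ < ℓₖ` of the second block's values, and at any other position `i` the value of `w` is `i`
minus the number of `ℓ_j` left of `i`, which is the formula for `w_{ℓ₁,…,ℓₖ}`. Conversely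
`w_{ℓ₁,…,ℓₖ}` is increasing on the `ℓ_j`, with values in the second block, and on the remaining
positions, with values in the first.
-/

open Finset

theorem map_span_image_le_span_image_iff {ι R M : Type*} [Ring R] [Nontrivial R]
    [AddCommGroup M] [Module R M] (b : Module.Basis ι R M) (N : M →ₗ[R] M) (p : ι → Prop)
    [DecidablePred p] (f : ι → ι) (hN : ∀ x, N (b x) = if p x then 0 else b (f x))
    (S T : Set ι) :
    (Submodule.span R (b '' S)).map N ≤ Submodule.span R (b '' T) ↔ ∀ x ∈ S, ¬ p x → f x ∈ T := by
  rw [Submodule.map_span, Submodule.span_le, Set.image_image, Set.image_subset_iff]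
  refine forall₂_congr fun x _ => ?_
  rw [Set.mem_preimage, hN]
  split_ifs with hp <;> simp [hp, b.self_mem_span_image]

theorem setOf_exists_eq_single_eq_image {ι R : Type*} [Finite ι] [DecidableEq ι] [Semiring R]
    (w : ι → ι) (q : ι → Prop) :
    {v : ι → R | ∃ r, q r ∧ v = Pi.single (w r) 1} = Pi.basisFun R ι '' (w '' {r | q r}) := by
  ext v
  simp [eq_comm]

theorem forall_image_Iic_iff {α : Type*} [LinearOrder α] (e : Equiv.Perm α) (p : α → Prop)
    (f : α → α) :
    (∀ i, ∀ x ∈ e '' Set.Iic i, ¬ p x → f x ∈ e '' Set.Iio i) ↔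
      ∀ x, ¬ p x → e.symm (f x) < e.symm x := by
  simp only [Equiv.image_eq_preimage_symm, Set.mem_preimage, Set.mem_Iic, Set.mem_Iio]
  exact ⟨fun h x hx => h _ x le_rfl hx, fun h i x hx hp => (h x hp).trans_le hx⟩

theorem Fin.orderPred_eq_sub_one {n : ℕ} {x : Fin n} (hx : ¬ IsMin x) :
    Order.pred x = ⟨x - 1, by omega⟩ := by
  have hx0 : (x : ℕ) ≠ 0 := fun h => hx fun y _ => Fin.le_def.mpr (by omega)
  have hlt : (⟨x - 1, by omega⟩ : Fin n) < x := Fin.lt_def.mpr (by simp only; omega)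
  have h1 := Fin.lt_def.mp (Order.pred_lt_of_not_isMin hx)
  have h2 := Fin.le_def.mp (Order.le_pred_of_lt hlt)
  ext
  simp only at h2 ⊢
  omega

theorem sub_one_lt_iff_strictMonoOn {α : Type*} [Preorder α] {n : ℕ} (m : ℕ) (g : Fin n → α) :
    (∀ x : Fin n, ¬((x : ℕ) = 0 ∨ (x : ℕ) = m) → g ⟨x - 1, by omega⟩ < g x) ↔
      StrictMonoOn g {x | (x : ℕ) < m} ∧ StrictMonoOn g {x | m ≤ (x : ℕ)} := by
  have hval : Monotone (Fin.val : Fin n → ℕ) := fun _ _ h => h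
  constructor
  · intro hg
    refine ⟨strictMonoOn_of_pred_lt (Set.ordConnected_Iio.preimage_mono hval) ?_,
      strictMonoOn_of_pred_lt (Set.ordConnected_Ici.preimage_mono hval) ?_⟩ <;>
    · intro a ha ha' hpa
      rw [Fin.orderPred_eq_sub_one ha] at hpa ⊢
      have : (a : ℕ) ≠ 0 := fun h => ha fun y _ => Fin.le_def.mpr (by omega)
      exact hg a (by simp only [Set.mem_ofPred_eq] at ha' hpa; omega)
  · rintro ⟨hlow, hhigh⟩ x hx
    have hlt : (⟨x - 1, by omega⟩ : Fin n) < x := Fin.lt_def.mpr (by simp only; omega)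
    rcases Nat.lt_or_gt_of_ne (not_or.mp hx).2 with h | h
    · exact hlow (show (x : ℕ) - 1 < m by omega) h hlt
    · exact hhigh (show m ≤ (x : ℕ) - 1 by omega) h.le hlt

theorem flag_condition_iff_strictMonoOn (n k : ℕ) (N : (Fin n → ℂ) →ₗ[ℂ] (Fin n → ℂ))
    (hN : ∀ i : Fin n, N (Pi.single i 1) =
      if (i : ℕ) = 0 ∨ (i : ℕ) = n - k then 0
      else Pi.single (⟨(i : ℕ) - 1, lt_of_le_of_lt (Nat.sub_le _ _) i.isLt⟩ : Fin n) 1)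
    (w : Equiv.Perm (Fin n)) :
    (∀ i : Fin n,
        Submodule.map N
            (Submodule.span ℂ {v : Fin n → ℂ | ∃ r : Fin n, r ≤ i ∧ v = Pi.single (w r) 1}) ≤
          Submodule.span ℂ {v : Fin n → ℂ | ∃ r : Fin n, r < i ∧ v = Pi.single (w r) 1}) ↔
      StrictMonoOn w.symm {x | (x : ℕ) < n - k} ∧ StrictMonoOn w.symm {x | n - k ≤ (x : ℕ)} := by
  simp only [setOf_exists_eq_single_eq_image]
  rw [← sub_one_lt_iff_strictMonoOn, ← forall_image_Iic_iff]
  refine forall_congr' fun i => map_span_image_le_span_image_iff _ N _ _ (fun x => ?_) _ _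
  simp only [Pi.basisFun_apply]
  exact hN x

namespace goodL

variable {n k : ℕ} {ℓ : ℕ → ℕ}

theorem strictMonoOn (hℓ : goodL n k ℓ) : StrictMonoOn ℓ (Icc 1 k : Set ℕ) := by
  intro j hj j' hj' hlt
  simp only [coe_Icc, Set.mem_Icc] at hj hj'
  exact hℓ.2 _ _ hj.1 hlt hj'.2

theorem card_filter_le_card (hℓ : goodL n k ℓ) {p : ℕ → Prop} [DecidablePred p] {I : Finset ℕ}
    (hI : ∀ j ∈ Icc 1 k, p j → ℓ j ∈ I) : #{j ∈ Icc 1 k | p j} ≤ #I :=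
  card_le_card_of_injOn ℓ (fun j hj => hI j (mem_filter.mp hj).1 (mem_filter.mp hj).2)
    (hℓ.strictMonoOn.injOn.mono fun _ hj => (mem_filter.mp hj).1)

theorem wPerm_apply (hℓ : goodL n k ℓ) {j : ℕ} (hj : j ∈ Icc 1 k) :
    wPerm n k ℓ (ℓ j) = n - k + j := by
  have hle : {r ∈ Icc 1 k | ℓ r ≤ ℓ j} = Icc 1 j := by
    ext r
    rw [mem_filter]
    constructor
    · rintro ⟨hr, hle⟩
      have := (hℓ.strictMonoOn.le_iff_le hr hj).mp hle
      simp only [mem_Icc] at hr ⊢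
      omega
    · intro hr
      have hrk : r ∈ Icc 1 k := by simp only [mem_Icc] at hr hj ⊢; omega
      exact ⟨hrk, (hℓ.strictMonoOn.le_iff_le hrk hj).mpr (mem_Icc.mp hr).2⟩
  rw [wPerm, if_pos ⟨j, hj, rfl⟩, hle, Nat.card_Icc, Nat.add_sub_cancel]

theorem wPerm_add_card_of_forall_ne (hℓ : goodL n k ℓ) {i : ℕ} (hi : ∀ j ∈ Icc 1 k, ℓ j ≠ i) :
    wPerm n k ℓ i + #{j ∈ Icc 1 k | ℓ j < i} = i := by
  have hcard : #{j ∈ Icc 1 k | ℓ j < i} ≤ #(Ico 1 i) :=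
    hℓ.card_filter_le_card fun j hj hlt => mem_Ico.mpr ⟨(hℓ.1 j hj).1, hlt⟩
  rw [Nat.card_Ico] at hcard
  rw [wPerm, if_neg (by simpa using hi)]
  omega

theorem wPerm_le_of_forall_ne (hℓ : goodL n k ℓ) {i : ℕ} (hin : i ≤ n)
    (hi : ∀ j ∈ Icc 1 k, ℓ j ≠ i) : wPerm n k ℓ i ≤ n - k := by
  have hsplit := card_filter_add_card_filter_not (s := Icc 1 k) (fun j => ℓ j < i)
  have hcard : #{j ∈ Icc 1 k | ¬ ℓ j < i} ≤ #(Ioc i n) :=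
    hℓ.card_filter_le_card fun j hj hlt =>
      mem_Ioc.mpr ⟨lt_of_le_of_ne (not_lt.mp hlt) (hi j hj).symm, (hℓ.1 j hj).2⟩
  have := hℓ.wPerm_add_card_of_forall_ne hi
  rw [Nat.card_Ioc] at hcard
  rw [Nat.card_Icc] at hsplit
  omega

theorem card_filter_lt_le_add (hℓ : goodL n k ℓ) (a b : ℕ) :
    #{j ∈ Icc 1 k | ℓ j < b} ≤ #{j ∈ Icc 1 k | ℓ j < a} + (b - a) := by
  have hsplit :=
    card_filter_add_card_filter_not (s := {j ∈ Icc 1 k | ℓ j < b}) (fun j => ℓ j < a)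
  have hlow : #{j ∈ {j ∈ Icc 1 k | ℓ j < b} | ℓ j < a} ≤ #{j ∈ Icc 1 k | ℓ j < a} := by
    rw [filter_filter]
    exact card_le_card fun j hj => by simp only [mem_filter] at hj ⊢; exact ⟨hj.1, hj.2.2⟩
  have hmid : #{j ∈ {j ∈ Icc 1 k | ℓ j < b} | ¬ ℓ j < a} ≤ #(Ico a b) := by
    rw [filter_filter]
    exact hℓ.card_filter_le_card fun j _ h => mem_Ico.mpr ⟨not_lt.mp h.2, h.1⟩
  rw [Nat.card_Ico] at hmid
  omega

theorem wPerm_le_wPerm_of_forall_ne (hℓ : goodL n k ℓ) {a b : ℕ} (hab : a ≤ b)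
    (ha : ∀ j ∈ Icc 1 k, ℓ j ≠ a) (hb : ∀ j ∈ Icc 1 k, ℓ j ≠ b) :
    wPerm n k ℓ a ≤ wPerm n k ℓ b := by
  have := hℓ.card_filter_lt_le_add a b
  have := hℓ.wPerm_add_card_of_forall_ne ha
  have := hℓ.wPerm_add_card_of_forall_ne hb
  omega

theorem le_apply_iff_exists_eq (hℓ : goodL n k ℓ) {w : Equiv.Perm (Fin n)}
    (hw : ∀ i : Fin n, (w i : ℕ) + 1 = wPerm n k ℓ (i + 1)) (i : Fin n) :
    n - k ≤ w i ↔ ∃ j ∈ Icc 1 k, ℓ j = i + 1 := by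
  constructor
  · intro hi
    by_contra! hmiss
    have := hℓ.wPerm_le_of_forall_ne (by omega) hmiss
    have := hw i
    omega
  · rintro ⟨j, hj, hji⟩
    have := hℓ.wPerm_apply hj
    rw [hji, ← hw i] at this
    have := (mem_Icc.mp hj).1
    omega

theorem strictMonoOn_symm (hℓ : goodL n k ℓ) {w : Equiv.Perm (Fin n)}
    (hw : ∀ i : Fin n, (w i : ℕ) + 1 = wPerm n k ℓ (i + 1)) :
    StrictMonoOn w.symm {x | (x : ℕ) < n - k} ∧ StrictMonoOn w.symm {x | n - k ≤ (x : ℕ)} := by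
  constructor
  · intro x hx y hy hxy
    obtain ⟨s, rfl⟩ := w.surjective x
    obtain ⟨r, rfl⟩ := w.surjective y
    simp only [Equiv.symm_apply_apply]
    have hmiss : ∀ t : Fin n, (w t : ℕ) < n - k → ∀ j ∈ Icc 1 k, ℓ j ≠ t + 1 := by
      intro t ht
      simpa using mt (hℓ.le_apply_iff_exists_eq hw t).mpr (not_le.mpr ht)
    by_contra! hrs
    have := hℓ.wPerm_le_wPerm_of_forall_ne (Nat.succ_le_succ hrs) (hmiss r hy) (hmiss s hx)
    rw [← hw, ← hw] at this
    exact absurd hxy (not_lt.mpr (Fin.le_def.mpr (by omega)))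
  · intro x hx y hy hxy
    obtain ⟨s, rfl⟩ := w.surjective x
    obtain ⟨r, rfl⟩ := w.surjective y
    simp only [Equiv.symm_apply_apply]
    obtain ⟨j, hj, hjs⟩ := (hℓ.le_apply_iff_exists_eq hw s).mp hx
    obtain ⟨j', hj', hjr⟩ := (hℓ.le_apply_iff_exists_eq hw r).mp hy
    have hs := hℓ.wPerm_apply hj
    have hr := hℓ.wPerm_apply hj'
    rw [hjs, ← hw] at hs
    rw [hjr, ← hw] at hr
    have := hℓ.strictMonoOn hj hj' (by rw [Fin.lt_def] at hxy; omega)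
    rw [Fin.lt_def]
    omega

end goodL

theorem card_filter_Iio_eq_of_strictMonoOn {n m : ℕ} {w : Equiv.Perm (Fin n)}
    (hw : StrictMonoOn w.symm {x | (x : ℕ) < m})
    {i : Fin n} (hi : (w i : ℕ) < m) : #{s ∈ Iio i | (w s : ℕ) < m} = w i := by
  rw [← Fin.card_Iio (w i)]
  refine card_bij (fun s _ => w s) (fun s hs => ?_) (fun s _ r _ h => w.injective h)
    (fun x hx => ?_)
  · simp only [mem_filter, mem_Iio] at hs ⊢
    simpa using (hw.lt_iff_lt hs.2 hi).mp (by simpa using hs.1)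
  · have hxm : (x : ℕ) < m := lt_trans (Fin.lt_def.mp (mem_Iio.mp hx)) hi
    refine ⟨w.symm x, ?_, w.apply_symm_apply x⟩
    simp only [mem_filter, mem_Iio, Equiv.apply_symm_apply]
    exact ⟨by simpa using (hw.lt_iff_lt hxm hi).mpr (mem_Iio.mp hx), hxm⟩

section UpperBlockPositions

variable {n k : ℕ} (w : Equiv.Perm (Fin n))

/-- `ℓ_j = w⁻¹(n - k + j - 1) + 1`, the `1`-based position of the `j`-th value of the second
Jordan block. -/
def upperBlockPositions (n k : ℕ) (w : Equiv.Perm (Fin n)) (j : ℕ) : ℕ :=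
  if h : n - k + j - 1 < n then w.symm ⟨n - k + j - 1, h⟩ + 1 else 0

theorem upperBlockPositions_apply {s : Fin n} (hs : n - k ≤ w s) :
    upperBlockPositions n k w (w s - (n - k) + 1) = s + 1 := by
  have hws : (⟨n - k + (w s - (n - k) + 1) - 1, by omega⟩ : Fin n) = w s :=
    Fin.ext (by simp only; omega)
  simp only [upperBlockPositions, dif_pos (show n - k + (w s - (n - k) + 1) - 1 < n by omega),
    hws, Equiv.symm_apply_apply]

theorem exists_sub_add_one_eq_of_mem_Icc (hk : k ≤ n) {j : ℕ} (hj : j ∈ Icc 1 k) :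
    ∃ s : Fin n, n - k ≤ w s ∧ w s - (n - k) + 1 = j := by
  rw [mem_Icc] at hj
  refine ⟨w.symm ⟨n - k + j - 1, by omega⟩, ?_⟩
  simp only [Equiv.apply_symm_apply]
  omega

variable {w}

theorem goodL_upperBlockPositions (hk : k ≤ n)
    (hhigh : StrictMonoOn w.symm {x | n - k ≤ (x : ℕ)}) :
    goodL n k (upperBlockPositions n k w) := by
  refine ⟨fun j hj => ?_, fun j j' hj hjj' hj' => ?_⟩
  · obtain ⟨s, hs, rfl⟩ := exists_sub_add_one_eq_of_mem_Icc w hk hj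
    rw [upperBlockPositions_apply w hs]
    omega
  · obtain ⟨s, hs, rfl⟩ := exists_sub_add_one_eq_of_mem_Icc w hk (mem_Icc.mpr ⟨hj, by omega⟩)
    obtain ⟨r, hr, rfl⟩ := exists_sub_add_one_eq_of_mem_Icc w hk (mem_Icc.mpr ⟨by omega, hj'⟩)
    rw [upperBlockPositions_apply w hs, upperBlockPositions_apply w hr]
    have := (hhigh.lt_iff_lt hs hr).mpr (Fin.lt_def.mpr (by omega))
    simp only [Equiv.symm_apply_apply, Fin.lt_def] at this
    omega

theorem card_filter_upperBlockPositions_lt (hk : k ≤ n) (i : Fin n) :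
    #{j ∈ Icc 1 k | upperBlockPositions n k w j < i + 1} = #{s ∈ Iio i | n - k ≤ (w s : ℕ)} := by
  refine (card_bij (fun s _ => w s - (n - k) + 1) (fun s hs => ?_) (fun s hs r hr h => ?_)
    (fun j hj => ?_)).symm
  · simp only [mem_filter, mem_Iio] at hs
    rw [mem_filter, upperBlockPositions_apply w hs.2, mem_Icc]
    exact ⟨by omega, by have := Fin.lt_def.mp hs.1; omega⟩
  · simp only [mem_filter] at hs hr
    exact w.injective (Fin.ext (by omega))
  · obtain ⟨s, hs, rfl⟩ := exists_sub_add_one_eq_of_mem_Icc w hk (mem_filter.mp hj).1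
    have := (mem_filter.mp hj).2
    rw [upperBlockPositions_apply w hs] at this
    exact ⟨s, mem_filter.mpr ⟨mem_Iio.mpr (Fin.lt_def.mpr (by omega)), hs⟩, rfl⟩

theorem apply_add_one_eq_wPerm_upperBlockPositions (hk : k ≤ n)
    (hlow : StrictMonoOn w.symm {x | (x : ℕ) < n - k})
    (hhigh : StrictMonoOn w.symm {x | n - k ≤ (x : ℕ)}) (i : Fin n) :
    (w i : ℕ) + 1 = wPerm n k (upperBlockPositions n k w) (i + 1) := by
  have hgood := goodL_upperBlockPositions hk hhigh
  by_cases hi : n - k ≤ w i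
  · rw [← upperBlockPositions_apply w hi, hgood.wPerm_apply (by simp; omega)]
    omega
  · have hmiss : ∀ j ∈ Icc 1 k, upperBlockPositions n k w j ≠ i + 1 := by
      intro j hj hji
      obtain ⟨s, hs, rfl⟩ := exists_sub_add_one_eq_of_mem_Icc w hk hj
      rw [upperBlockPositions_apply w hs, add_left_inj, ← Fin.ext_iff] at hji
      exact hi (hji ▸ hs)
    -- the positions left of `i` split by block: `w i` of them carry first-block values
    have hsplit := card_filter_add_card_filter_not (s := Iio i) (fun s => (w s : ℕ) < n - k)
    simp only [not_lt] at hsplit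
    rw [card_filter_Iio_eq_of_strictMonoOn hlow (by omega), Fin.card_Iio,
      ← card_filter_upperBlockPositions_lt hk] at hsplit
    have := hgood.wPerm_add_card_of_forall_ne hmiss
    omega

end UpperBlockPositions

/-- Lemma 2.1 (linear-algebraic form): for the nilpotent operator `N` with two
Jordan blocks of sizes `n-k` and `k` (so `N e₁ = 0`, `N e_{n-k+1} = 0`, and
`N eᵢ = e_{i-1}` otherwise; here indices are 0-based, so `e_i = Pi.single i 1`
for `i : Fin n`), the flag `V_i = span(e_{w(1)},…,e_{w(i)})` satisfies
`N V_i ⊆ V_{i-1}` for all `i` iff `w = w_{ℓ₁,…,ℓₖ}` for some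
`1 ≤ ℓ₁ < ⋯ < ℓₖ ≤ n`. -/
theorem springer_fixed_points (n k : ℕ) (h : 2 * k ≤ n)
    (N : (Fin n → ℂ) →ₗ[ℂ] (Fin n → ℂ))
    (hN : ∀ i : Fin n, N (Pi.single i 1) =
      if (i : ℕ) = 0 ∨ (i : ℕ) = n - k then 0
      else Pi.single (⟨(i : ℕ) - 1, lt_of_le_of_lt (Nat.sub_le _ _) i.isLt⟩ : Fin n) 1)
    (w : Equiv.Perm (Fin n)) :
    (∀ i : Fin n,
        Submodule.map N
            (Submodule.span ℂ {v : Fin n → ℂ | ∃ r : Fin n, r ≤ i ∧ v = Pi.single (w r) 1}) ≤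
          Submodule.span ℂ {v : Fin n → ℂ | ∃ r : Fin n, r < i ∧ v = Pi.single (w r) 1}) ↔
      (∃ ℓ : ℕ → ℕ, goodL n k ℓ ∧
        ∀ i : Fin n, (w i : ℕ) + 1 = wPerm n k ℓ ((i : ℕ) + 1)) := by
  have hk : k ≤ n := by omega
  rw [flag_condition_iff_strictMonoOn n k N hN w]
  constructor
  · rintro ⟨hlow, hhigh⟩
    exact ⟨upperBlockPositions n k w, goodL_upperBlockPositions hk hhigh,
      apply_add_one_eq_wPerm_upperBlockPositions hk hlow hhigh⟩
  · rintro ⟨ℓ, hℓ, hw⟩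
    exact hℓ.strictMonoOn_symm hw
end

section
/- (Relations (3.3) at the fixed points.) Let n ≥ 2k ≥ 0 and let w = w_{ℓ_1,...,ℓ_k} for some 1 ≤ ℓ_1 < ℓ_2 < ... < ℓ_k ≤ n, with the convention w(0) := 0. Then for every 1 ≤ i ≤ n, either w(i) + w(i−1) = n−k+i or w(i) − w(i−1) = 1; equivalently, (w(i) + w(i−1) − (n−k+i)) · (w(i) − w(i−1) − 1) = 0 as integers. -/
open scoped BigOperators

/-!
Write `c m = #{j | ℓ j ≤ m}` and `L = {ℓ₁, …, ℓₖ}`. Then `w m = n - k + c m` for `m ∈ L` and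
`w m = m - c m` otherwise, with no truncation since `c m ≤ m` (the `ℓ j` are distinct and
positive) and `k ≤ n`. Moreover `c i = c (i - 1) + 1` or `c i = c (i - 1)` according as `i ∈ L`
or not. In each of the four cases for the membership of `i` and `i - 1` in `L` one of the two
relations is then a linear identity.
-/

open Finset

lemma goodL.strictMonoOn_s4 {n k : ℕ} {ℓ : ℕ → ℕ} (hℓ : goodL n k ℓ) :
    StrictMonoOn ℓ (Icc 1 k : Finset ℕ) := by
  intro a ha b hb hab
  rw [coe_Icc, Set.mem_Icc] at ha hb
  exact hℓ.2 a b ha.1 hab hb.2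

lemma card_filter_le_eq_card_filter_lt_add_ite {s : Finset ℕ} {ℓ : ℕ → ℕ}
    (hinj : Set.InjOn ℓ s) (m : ℕ) :
    #{j ∈ s | ℓ j ≤ m} = #{j ∈ s | ℓ j < m} + if ∃ j ∈ s, ℓ j = m then 1 else 0 := by
  split_ifs with hm
  · obtain ⟨j₀, hj₀, rfl⟩ := hm
    have : {j ∈ s | ℓ j ≤ ℓ j₀} = insert j₀ {j ∈ s | ℓ j < ℓ j₀} := by
      ext j
      simp only [mem_filter, mem_insert]
      constructor
      · rintro ⟨hj, hle⟩
        rcases hle.lt_or_eq with hlt | heq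
        · exact Or.inr ⟨hj, hlt⟩
        · exact Or.inl (hinj hj hj₀ heq)
      · rintro (rfl | ⟨hj, hlt⟩)
        · exact ⟨hj₀, le_rfl⟩
        · exact ⟨hj, hlt.le⟩
    rw [this, card_insert_of_notMem (by simp)]
  · rw [add_zero]
    congr 1
    refine filter_congr fun j hj => ?_
    have : ℓ j ≠ m := fun heq => hm ⟨j, hj, heq⟩
    omega

lemma card_filter_le_le {s : Finset ℕ} {ℓ : ℕ → ℕ} (hinj : Set.InjOn ℓ s)
    (hpos : ∀ j ∈ s, 1 ≤ ℓ j) (m : ℕ) : #{j ∈ s | ℓ j ≤ m} ≤ m := by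
  simpa using card_le_card_of_injOn ℓ (t := Icc 1 m)
    (fun j hj => by
      rw [mem_coe, mem_filter] at hj
      simpa using ⟨hpos j hj.1, hj.2⟩)
    (hinj.mono (coe_subset.mpr (filter_subset _ _)))

lemma card_filter_lt_eq_card_filter_le_pred (s : Finset ℕ) (ℓ : ℕ → ℕ) {i : ℕ} (hi : 1 ≤ i) :
    #{j ∈ s | ℓ j < i} = #{j ∈ s | ℓ j ≤ i - 1} := by
  congr 1
  exact filter_congr fun j _ => by omega

lemma wPerm_intCast {n k : ℕ} {ℓ : ℕ → ℕ} (hk : k ≤ n) (hℓ : goodL n k ℓ) (m : ℕ) :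
    (wPerm n k ℓ m : ℤ) = if ∃ j ∈ Icc 1 k, ℓ j = m then
      (n : ℤ) - k + #{j ∈ Icc 1 k | ℓ j ≤ m} else (m : ℤ) - #{j ∈ Icc 1 k | ℓ j ≤ m} := by
  have hinj := hℓ.strictMonoOn_s4.injOn
  have hcount := card_filter_le_eq_card_filter_lt_add_ite hinj m
  have hle := card_filter_le_le hinj (fun j hj => (hℓ.1 j hj).1) m
  unfold wPerm
  split_ifs at hcount ⊢ <;> omega

/-- Relations (3.3) at the fixed points: for `w = w_{ℓ₁,…,ℓₖ}` (with `w 0 = 0`,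
which holds automatically for `wPerm`), for every `1 ≤ i ≤ n` either
`w i + w (i-1) = n - k + i` or `w i - w (i-1) = 1`; equivalently the integer
product `(w i + w (i-1) - (n-k+i)) * (w i - w (i-1) - 1)` vanishes. -/
theorem wPerm_relations (n k : ℕ) (h : 2 * k ≤ n) (ℓ : ℕ → ℕ) (hℓ : goodL n k ℓ) :
    ∀ i, 1 ≤ i → i ≤ n →
      (((wPerm n k ℓ i : ℤ) + (wPerm n k ℓ (i - 1) : ℤ) = (n : ℤ) - (k : ℤ) + (i : ℤ) ∨
          (wPerm n k ℓ i : ℤ) - (wPerm n k ℓ (i - 1) : ℤ) = 1) ∧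
        ((wPerm n k ℓ i : ℤ) + (wPerm n k ℓ (i - 1) : ℤ) - ((n : ℤ) - (k : ℤ) + (i : ℤ))) *
            ((wPerm n k ℓ i : ℤ) - (wPerm n k ℓ (i - 1) : ℤ) - 1) = 0) := by
  intro i hi _
  have hk : k ≤ n := by omega
  have hstep := card_filter_le_eq_card_filter_lt_add_ite hℓ.strictMonoOn_s4.injOn i
  rw [card_filter_lt_eq_card_filter_le_pred _ _ hi] at hstep
  have hrel : (wPerm n k ℓ i : ℤ) + wPerm n k ℓ (i - 1) = (n : ℤ) - k + i ∨
      (wPerm n k ℓ i : ℤ) - wPerm n k ℓ (i - 1) = 1 := by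
    rw [wPerm_intCast hk hℓ i, wPerm_intCast hk hℓ (i - 1)]
    split_ifs at hstep ⊢ <;> omega
  exact ⟨hrel, mul_eq_zero.mpr (hrel.imp sub_eq_zero.mpr sub_eq_zero.mpr)⟩
end

section
/- (Relations (3.4) at the fixed points.) Let n ≥ 2k ≥ 0 and let w = w_{ℓ_1,...,ℓ_k} for some 1 ≤ ℓ_1 < ℓ_2 < ... < ℓ_k ≤ n. Then for every choice of integers 1 ≤ i_0 < i_1 < ... < i_k ≤ n there exists some j with 0 ≤ j ≤ k such that w(i_j) = i_j − j; equivalently, the integer product ∏_{j=0}^{k} (w(i_j) − (i_j − j)) equals 0. -/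
open scoped BigOperators

/-- Relations (3.4) at the fixed points: for `w = w_{ℓ₁,…,ℓₖ}` and any
`1 ≤ i₀ < i₁ < ⋯ < iₖ ≤ n` (here `m j = i_j`, `j : Fin (k+1)` 0-based),
there is some `0 ≤ j ≤ k` with `w (i_j) = i_j - j`; equivalently the integer
product `∏ⱼ (w (i_j) - (i_j - j))` vanishes. -/
theorem wPerm_relations_product (n k : ℕ) (h : 2 * k ≤ n) (ℓ : ℕ → ℕ)
    (hℓ : goodL n k ℓ) (m : Fin (k + 1) → ℕ) (hm : StrictMono m)
    (hm1 : 1 ≤ m 0) (hmn : m (Fin.last k) ≤ n) :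
    (∃ j : Fin (k + 1), (wPerm n k ℓ (m j) : ℤ) = (m j : ℤ) - (j : ℕ)) ∧
      ∏ j : Fin (k + 1), ((wPerm n k ℓ (m j) : ℤ) - ((m j : ℤ) - ((j : ℕ) : ℤ))) = 0 := by
  classical
  set c : ℕ → ℕ := fun i => ((Finset.Icc 1 k).filter fun r => ℓ r < i).card with hc
  have hcmono : ∀ {a b : ℕ}, a < b → c a ≤ c b := by
    intro a b hab
    apply Finset.card_le_card
    intro r hr
    simp only [Finset.mem_filter] at hr ⊢
    exact ⟨hr.1, hr.2.trans hab⟩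
  have hck : ∀ i, c i ≤ k := by
    intro i
    calc c i ≤ (Finset.Icc 1 k).card := Finset.card_filter_le _ _
    _ = k := by simp
  have hlb : ∀ t : Fin (k+1), (t : ℕ) < m t := by
    intro t
    obtain ⟨t, ht⟩ := t
    induction t with
    | zero => exact hm1
    | succ s ih =>
      have hs : s < k + 1 := by omega
      have h1 : (⟨s, hs⟩ : Fin (k+1)) < ⟨s+1, ht⟩ := by simp [Fin.lt_def]
      have h2 : s < m ⟨s, hs⟩ := ih hs
      have h3 : m ⟨s, hs⟩ < m ⟨s+1, ht⟩ := hm h1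
      show s + 1 < m ⟨s+1, ht⟩
      omega
  set J : Finset (Fin (k+1)) := Finset.univ.filter (fun j => (j : ℕ) ≤ c (m j)) with hJ
  have hne : J.Nonempty := ⟨0, by simp [hJ]⟩
  set j := J.max' hne with hj
  have hjmem : (j : ℕ) ≤ c (m j) := by
    have := J.max'_mem hne
    simpa [hJ] using this
  have hkey : c (m j) = (j : ℕ) ∧ ¬ ∃ r ∈ Finset.Icc 1 k, ℓ r = m j := by
    rcases lt_or_eq_of_le (Nat.lt_succ_iff.mp j.isLt) with hlt | heq
    · -- j.val < k
      set j' : Fin (k+1) := ⟨(j : ℕ) + 1, by omega⟩ with hj'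
      have hjj' : j < j' := by simp [Fin.lt_def, hj']
      have hj'notin : j' ∉ J := by
        intro hmem
        have h1 := J.le_max' j' hmem
        rw [← hj] at h1
        exact absurd h1 (not_le_of_gt hjj')
      have hcj' : c (m j') ≤ (j : ℕ) := by
        by_contra hcon
        apply hj'notin
        simp only [hJ, Finset.mem_filter, Finset.mem_univ, true_and]
        have hv : (j' : ℕ) = (j : ℕ) + 1 := rfl
        omega
      have hmm : m j < m j' := hm hjj'
      have hceq : c (m j) = (j : ℕ) := le_antisymm ((hcmono hmm).trans hcj') hjmem
      refine ⟨hceq, ?_⟩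
      rintro ⟨r, hr, hreq⟩
      have hrnot : r ∉ (Finset.Icc 1 k).filter fun s => ℓ s < m j := by
        simp [hreq]
      have hsub : insert r ((Finset.Icc 1 k).filter fun s => ℓ s < m j) ⊆
          (Finset.Icc 1 k).filter fun s => ℓ s < m j' := by
        intro s hs
        rcases Finset.mem_insert.mp hs with rfl | hs
        · exact Finset.mem_filter.mpr ⟨hr, by rw [hreq]; exact hmm⟩
        · simp only [Finset.mem_filter] at hs ⊢
          exact ⟨hs.1, hs.2.trans hmm⟩
      have := Finset.card_le_card hsub
      rw [Finset.card_insert_of_notMem hrnot] at this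
      have : c (m j) + 1 ≤ c (m j') := this
      omega
    · -- j.val = k
      have hceq : c (m j) = (j : ℕ) := le_antisymm (by rw [heq]; exact hck (m j)) hjmem
      refine ⟨hceq, ?_⟩
      rintro ⟨r, hr, hreq⟩
      have hall : (Finset.Icc 1 k).filter (fun s => ℓ s < m j) = Finset.Icc 1 k := by
        apply Finset.eq_of_subset_of_card_le (Finset.filter_subset _ _)
        have : c (m j) = k := by omega
        simp only [hc] at this
        simp [this]
      have : ℓ r < m j := by
        have := hall ▸ hr
        exact (Finset.mem_filter.mp this).2
      omega
  obtain ⟨hceq, hnot⟩ := hkey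
  have hw : wPerm n k ℓ (m j) = m j - (j : ℕ) := by
    rw [wPerm, if_neg hnot]
    exact congrArg (fun t => m j - t) hceq
  have hcast : (wPerm n k ℓ (m j) : ℤ) = (m j : ℤ) - ((j : ℕ) : ℤ) := by
    rw [hw, Nat.cast_sub (le_of_lt (hlb j))]
  refine ⟨⟨j, hcast⟩, ?_⟩
  apply Finset.prod_eq_zero (Finset.mem_univ j)
  rw [hcast]
  ring
end

section
/- (Equation (3.11).) Let n, k be integers with 0 ≤ k ≤ n/2 and let I be the ideal of ℚ[x_1,...,x_n,t] described below. Then for every 1 ≤ i ≤ n, the polynomial x_i² − (n−k+i+1)·t·x_i − t·(Σ_{p=1}^{i−1} x_p) + (Σ_{p=1}^{i} (n−k+p))·t² belongs to I. -/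
open scoped BigOperators

/-- The variable `t` in `ℚ[x₁,…,xₙ,t] = MvPolynomial (Fin (n+1)) ℚ`
(variable `0` is `t`, variable `i` is `xᵢ` for `1 ≤ i ≤ n`). -/
noncomputable def tP (n : ℕ) : MvPolynomial (Fin (n + 1)) ℚ :=
  MvPolynomial.X 0

/-- The variable `xᵢ` (for `1 ≤ i ≤ n`) of `ℚ[x₁,…,xₙ,t]`, with the
convention `x₀ = 0` (and `xᵢ = 0` out of range). -/
noncomputable def xP (n : ℕ) (i : ℕ) : MvPolynomial (Fin (n + 1)) ℚ :=
  if h : 1 ≤ i ∧ i ≤ n then MvPolynomial.X ⟨i, by omega⟩ else 0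

/-- The ideal `I` of `ℚ[x₁,…,xₙ,t]` generated by
(i) `∑ᵢ xᵢ - (n(n+1)/2)·t`;
(ii) `(xᵢ + xᵢ₋₁ - (n-k+i)·t)·(xᵢ - xᵢ₋₁ - t)` for `1 ≤ i ≤ n`;
(iii) `∏_{j=0}^{k} (x_{i_j} - (i_j - j)·t)` for all `1 ≤ i₀ < ⋯ < iₖ ≤ n`. -/
noncomputable def Iid (n k : ℕ) : Ideal (MvPolynomial (Fin (n + 1)) ℚ) :=
  Ideal.span
    ({(∑ i ∈ Finset.Icc 1 n, xP n i) -
        MvPolynomial.C (((n : ℚ) * ((n : ℚ) + 1)) / 2) * tP n} ∪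
      {p | ∃ i, 1 ≤ i ∧ i ≤ n ∧
        p = (xP n i + xP n (i - 1) - MvPolynomial.C ((n : ℚ) - (k : ℚ) + (i : ℚ)) * tP n) *
              (xP n i - xP n (i - 1) - tP n)} ∪
      {p | ∃ m : Fin (k + 1) → ℕ, StrictMono m ∧ 1 ≤ m 0 ∧ m (Fin.last k) ≤ n ∧
        p = ∏ j : Fin (k + 1),
              (xP n (m j) - MvPolynomial.C ((m j : ℚ) - ((j : ℕ) : ℚ)) * tP n)})

/-! Writing `Fᵢ` for the polynomial of (3.11) and `gⱼ` for the generator (ii) with index `j`,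
one checks `Fᵢ - Fᵢ₋₁ = gᵢ`, while `F₀ = 0` because `x₀ = 0`; hence `Fᵢ = g₁ + ⋯ + gᵢ ∈ I`. -/

open Finset MvPolynomial

section Telescoping

variable {R : Type*} [CommRing R] (x : ℕ → R) (t a : R)

lemma sum_Icc_one_sub_one_add_eq (hx : x 0 = 0) (i : ℕ) :
    ∑ p ∈ Icc 1 (i - 1), x p + x i = ∑ p ∈ Icc 1 i, x p := by
  rcases i with _ | i
  · simp [hx]
  · simp [sum_Icc_succ_top]

lemma sq_relation_eq_sum_Icc (hx : x 0 = 0) (i : ℕ) :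
    x i ^ 2 - (a + i + 1) * t * x i - t * ∑ p ∈ Icc 1 (i - 1), x p +
        (∑ p ∈ Icc 1 i, (a + p)) * t ^ 2 =
      ∑ j ∈ Icc 1 i, (x j + x (j - 1) - (a + j) * t) * (x j - x (j - 1) - t) := by
  induction i with
  | zero => simp [hx]
  | succ i ih =>
    rw [Nat.add_sub_cancel, sum_Icc_succ_top (b := i) (by omega),
      sum_Icc_succ_top (b := i) (by omega), ← ih, ← sum_Icc_one_sub_one_add_eq x hx i]
    push_cast
    ring

end Telescoping

lemma xP_zero (n : ℕ) : xP n 0 = 0 := by simp [xP]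

lemma consecutive_relation_mem_Iid (n k i : ℕ) (h1 : 1 ≤ i) (h2 : i ≤ n) :
    (xP n i + xP n (i - 1) - C ((n : ℚ) - (k : ℚ) + (i : ℚ)) * tP n) *
      (xP n i - xP n (i - 1) - tP n) ∈ Iid n k :=
  Ideal.subset_span (Or.inl (Or.inr ⟨i, h1, h2, rfl⟩))

theorem sq_relation_mem_Iid_general (n k : ℕ) :
    ∀ i, 1 ≤ i → i ≤ n →
      (xP n i) ^ 2 - MvPolynomial.C ((n : ℚ) - (k : ℚ) + (i : ℚ) + 1) * tP n * xP n i -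
          tP n * (∑ p ∈ Finset.Icc 1 (i - 1), xP n p) +
          MvPolynomial.C (∑ p ∈ Finset.Icc 1 i, ((n : ℚ) - (k : ℚ) + (p : ℚ))) * (tP n) ^ 2 ∈
        Iid n k := by
  intro i _ hi
  have h := sq_relation_eq_sum_Icc (xP n) (tP n) (C ((n : ℚ) - k)) (xP_zero n) i
  simp only [map_add, map_sum, map_one, map_natCast] at h ⊢
  rw [h]
  refine sum_mem fun j hj => ?_
  have hj := mem_Icc.mp hj
  simpa only [map_add, map_natCast] using consecutive_relation_mem_Iid n k j hj.1 (hj.2.trans hi)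

/-- Equation (3.11): `xᵢ² - (n-k+i+1)·t·xᵢ - t·∑_{p<i} x_p + (∑_{p≤i}(n-k+p))·t² ∈ I`. -/
theorem sq_relation_mem_Iid (n k : ℕ) (h : 2 * k ≤ n) :
    ∀ i, 1 ≤ i → i ≤ n →
      (xP n i) ^ 2 - MvPolynomial.C ((n : ℚ) - (k : ℚ) + (i : ℚ) + 1) * tP n * xP n i -
          tP n * (∑ p ∈ Finset.Icc 1 (i - 1), xP n p) +
          MvPolynomial.C (∑ p ∈ Finset.Icc 1 i, ((n : ℚ) - (k : ℚ) + (p : ℚ))) * (tP n) ^ 2 ∈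
        Iid n k :=
  sq_relation_mem_Iid_general n k
end

section
/- (Proposition 4.1.) Let n, k be integers with 0 ≤ k ≤ n/2 and let I be the ideal of ℚ[x_1,...,x_n,t] described below. Regard the quotient ring ℚ[x_1,...,x_n,t]/I as a module over ℚ[t] via the inclusion t ↦ t. Then ℚ[x_1,...,x_n,t]/I is generated as a ℚ[t]-module by the residue classes of the squarefree monomials x_S := ∏_{j∈S} x_j, where S ranges over all subsets of {1,...,n} of cardinality ℓ with 0 ≤ ℓ ≤ k whose m-th smallest element is at least 2m for every 1 ≤ m ≤ ℓ (for S = ∅ the monomial is 1). -/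
open scoped BigOperators

/-- `S` is the bottom row of a standard tableau on a two-row shape `(n-ℓ,ℓ)`
with `ℓ = S.card ≤ k`: its `m`-th smallest element is at least `2m`. -/
def goodS (n k : ℕ) (S : Finset ℕ) : Prop :=
  S ⊆ Finset.Icc 1 n ∧ S.card ≤ k ∧
    ∀ j ∈ S, 2 * (S.filter fun a => a ≤ j).card ≤ j


/-!
Straightening happens in the ℚ-vector space with basis the finite subsets of ℕ. On subsets of
`{1, …, m}` the raising operator `up` and the lowering operator `down` are adjoint for the dot
product in which subsets are orthonormal, and `up ∘ down - down ∘ up = 2l - m` on `l`-subsets.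
Hence `up ∘ down` is positive definite on `l`-subsets when `2l > m`, so each of them lies in the
image of `up`. Induction on `m`, splitting off the element `m`, then shows that for `2d ≤ m`
every `d`-subset is a combination of standard bottom rows modulo the image of `up`.

In the quotient ring a monomial is reduced by induction on its degree, since a term divisible by
`t` is `t` times a monomial of lower degree. A repeated variable is removed with relation (ii),
which trades `xᵢ²` for `xᵢ₋₁²` and ends at `x₀ = 0`. A squarefree monomial of degree `> k` is
handled by relation (iii). One of degree `≤ k` is handled by straightening: under `S ↦ x_S` the
vector `up (single T 1)` maps to `(∑ᵢ xᵢ - ∑_{i ∈ T} xᵢ) x_T`, which relation (i) turns into a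
multiple of `t x_T` plus monomials with a repeated variable.
-/

open Finset Finsupp

namespace BooleanLattice

noncomputable section

def up (m : ℕ) : (Finset ℕ →₀ ℚ) →ₗ[ℚ] (Finset ℕ →₀ ℚ) :=
  linearCombination ℚ fun S => ∑ i ∈ Icc 1 m \ S, single (insert i S) 1

def down : (Finset ℕ →₀ ℚ) →ₗ[ℚ] (Finset ℕ →₀ ℚ) :=
  linearCombination ℚ fun S => ∑ j ∈ S, single (S.erase j) 1

def dot : (Finset ℕ →₀ ℚ) →ₗ[ℚ] (Finset ℕ →₀ ℚ) →ₗ[ℚ] ℚ :=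
  linearCombination ℚ lapply

def level (m l : ℕ) : Submodule ℚ (Finset ℕ →₀ ℚ) :=
  Submodule.span ℚ ((single · 1) '' {S | S ⊆ Icc 1 m ∧ S.card = l})

variable {m l : ℕ}

lemma up_single (S : Finset ℕ) :
    up m (single S 1) = ∑ i ∈ Icc 1 m \ S, single (insert i S) 1 := by
  simp [up]

lemma down_single (S : Finset ℕ) : down (single S 1) = ∑ j ∈ S, single (S.erase j) 1 := by
  simp [down]

lemma dot_single_left (S : Finset ℕ) (v : Finset ℕ →₀ ℚ) : dot (single S 1) v = v S := by
  simp [dot]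

lemma dot_apply (w v : Finset ℕ →₀ ℚ) : dot w v = ∑ S ∈ w.support, w S * v S := by
  simp [dot, linearCombination_apply, Finsupp.sum]

lemma dot_single_right (w : Finset ℕ →₀ ℚ) (S : Finset ℕ) : dot w (single S 1) = w S := by
  induction w using Finsupp.induction_linear with
  | zero => simp
  | add f g hf hg => simp [hf, hg]
  | single T c => simp [dot_apply, single_apply, eq_comm]

lemma dot_self_nonneg (v : Finset ℕ →₀ ℚ) : 0 ≤ dot v v := by
  rw [dot_apply]
  exact Finset.sum_nonneg fun _ _ => mul_self_nonneg _

lemma dot_self_pos {v : Finset ℕ →₀ ℚ} (hv : v ≠ 0) : 0 < dot v v := by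
  obtain ⟨S, hS⟩ := Finsupp.support_nonempty_iff.2 hv
  rw [dot_apply]
  exact Finset.sum_pos' (fun _ _ => mul_self_nonneg _)
    ⟨S, hS, mul_self_pos.2 (mem_support_iff.1 hS)⟩

lemma up_mem_level {v : Finset ℕ →₀ ℚ} (hv : v ∈ level m l) : up m v ∈ level m (l + 1) := by
  refine (Submodule.map_span_le _ _ _).2 ?_ (Submodule.mem_map_of_mem hv)
  rintro _ ⟨S, ⟨hS, hcard⟩, rfl⟩
  rw [up_single]
  refine Submodule.sum_mem _ fun i hi => Submodule.subset_span ⟨_, ⟨?_, ?_⟩, rfl⟩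
  · exact insert_subset (mem_sdiff.1 hi).1 hS
  · rw [card_insert_of_notMem (mem_sdiff.1 hi).2, hcard]

lemma down_mem_level {v : Finset ℕ →₀ ℚ} (hv : v ∈ level m (l + 1)) : down v ∈ level m l := by
  refine (Submodule.map_span_le _ _ _).2 ?_ (Submodule.mem_map_of_mem hv)
  rintro _ ⟨S, ⟨hS, hcard⟩, rfl⟩
  rw [down_single]
  refine Submodule.sum_mem _ fun j hj => Submodule.subset_span ⟨_, ⟨?_, ?_⟩, rfl⟩
  · exact (erase_subset j S).trans hS
  · rw [card_erase_of_mem hj, hcard, Nat.add_sub_cancel]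

lemma up_erase_single {S : Finset ℕ} (hS : S ⊆ Icc 1 m) {j : ℕ} (hj : j ∈ S) :
    up m (single (S.erase j) 1) =
      single S 1 + ∑ i ∈ Icc 1 m \ S, single (insert i (S.erase j)) 1 := by
  have : Icc 1 m \ S.erase j = insert j (Icc 1 m \ S) := by
    ext x
    by_cases hx : x = j <;> simp [hx, hj, hS hj]
  rw [up_single, this, sum_insert (by simp [hj]), insert_erase hj]

lemma down_insert_single {S : Finset ℕ} {i : ℕ} (hi : i ∉ S) :
    down (single (insert i S) 1) = single S 1 + ∑ j ∈ S, single (insert i (S.erase j)) 1 := by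
  rw [down_single, sum_insert hi, erase_insert hi]
  congr 1
  exact sum_congr rfl fun j hj => by rw [erase_insert_of_ne (by rintro rfl; exact hi hj)]

lemma up_down_single {S : Finset ℕ} (hS : S ⊆ Icc 1 m) :
    up m (down (single S 1)) = down (up m (single S 1)) + (2 * S.card - m : ℚ) • single S 1 := by
  have hcard : S.card ≤ m := by simpa using card_le_card hS
  rw [down_single, map_sum, sum_congr rfl fun j hj => up_erase_single hS hj, up_single, map_sum,
    sum_congr rfl fun i hi => down_insert_single (mem_sdiff.1 hi).2, sum_add_distrib,
    sum_add_distrib, sum_comm (s := Icc 1 m \ S), sum_const, sum_const, card_sdiff_of_subset hS,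
    Nat.card_Icc, ← Nat.cast_smul_eq_nsmul ℚ, ← Nat.cast_smul_eq_nsmul ℚ, Nat.add_sub_cancel,
    Nat.cast_sub hcard]
  module

lemma up_down_of_mem_level {v : Finset ℕ →₀ ℚ} (hv : v ∈ level m l) :
    up m (down v) = down (up m v) + (2 * l - m : ℚ) • v := by
  refine LinearMap.eqOn_span' (f := up m ∘ₗ down)
    (g := down ∘ₗ up m + (2 * l - m : ℚ) • LinearMap.id) ?_ hv
  rintro _ ⟨S, ⟨hS, rfl⟩, rfl⟩
  exact up_down_single hS

lemma dot_down_single_single {T : Finset ℕ} (hT : T ⊆ Icc 1 m) (S : Finset ℕ) :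
    dot (down (single T 1)) (single S 1) = dot (single T 1) (up m (single S 1)) := by
  have : T.filter (T.erase · = S) = (Icc 1 m \ S).filter (insert · S = T) := by
    ext j
    simp only [mem_filter, mem_sdiff]
    constructor
    · rintro ⟨hj, rfl⟩
      exact ⟨⟨hT hj, notMem_erase j T⟩, insert_erase hj⟩
    · rintro ⟨⟨-, hj⟩, rfl⟩
      exact ⟨mem_insert_self j S, erase_insert hj⟩
  simp only [dot_single_right, dot_single_left, down_single, up_single, finsetSum_apply,
    single_apply, sum_boole, this]

lemma dot_down {w : Finset ℕ →₀ ℚ} (hw : w ∈ level m l) (v : Finset ℕ →₀ ℚ) :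
    dot (down w) v = dot w (up m v) := by
  refine LinearMap.congr_fun
    (LinearMap.eqOn_span' (f := dot ∘ₗ down) (g := dot.compl₂ (up m)) ?_ hw) v
  rintro _ ⟨T, ⟨hT, -⟩, rfl⟩
  refine Finsupp.lhom_ext fun S c => ?_
  rw [← Finsupp.smul_single_one S c]
  simp only [LinearMap.coe_comp, Function.comp_apply, LinearMap.compl₂_apply, map_smul]
  rw [dot_down_single_single hT]

lemma eq_zero_of_up_down_eq_zero (hml : m < 2 * l) {v : Finset ℕ →₀ ℚ} (hv : v ∈ level m l)
    (h : up m (down v) = 0) : v = 0 := by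
  by_contra hv0
  -- `dot (up (down v)) v = dot (up v) (up v) + (2l - m) dot v v` by commutation and adjointness
  have hpos : 0 < dot (up m v) (up m v) + (2 * l - m : ℚ) * dot v v :=
    add_pos_of_nonneg_of_pos (dot_self_nonneg _)
      (mul_pos (by rw [sub_pos]; exact_mod_cast hml) (dot_self_pos hv0))
  have hzero : dot (up m (down v)) v = 0 := by rw [h, map_zero, LinearMap.zero_apply]
  rw [up_down_of_mem_level hv, map_add, map_smul, LinearMap.add_apply, LinearMap.smul_apply,
    dot_down (up_mem_level hv), smul_eq_mul] at hzero
  exact hpos.ne' hzero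

instance (m l : ℕ) : FiniteDimensional ℚ (level m l) :=
  FiniteDimensional.span_of_finite ℚ <| Set.Finite.image _ <|
    (Icc 1 m).powerset.finite_toSet.subset fun _ hS => mem_powerset.2 hS.1

theorem level_le_map_up (hml : m < 2 * (l + 1)) : level m (l + 1) ≤ (level m l).map (up m) := by
  let E : level m (l + 1) →ₗ[ℚ] level m (l + 1) :=
    (up m ∘ₗ down).restrict fun _ hv => up_mem_level (down_mem_level hv)
  have hE : Function.Surjective E := LinearMap.injective_iff_surjective.1 <|
    (injective_iff_map_eq_zero E).2 fun v hv => Subtype.ext <|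
      eq_zero_of_up_down_eq_zero hml v.2 (congrArg Subtype.val hv)
  intro v hv
  obtain ⟨w, hw⟩ := hE ⟨v, hv⟩
  exact ⟨down w, down_mem_level w.2, congrArg Subtype.val hw⟩

def IsStandardBottomRow (S : Finset ℕ) : Prop :=
  ∀ j ∈ S, 2 * (S.filter fun a => a ≤ j).card ≤ j

lemma IsStandardBottomRow.insert_succ {G : Finset ℕ} (hG : G ⊆ Icc 1 m)
    (hcard : 2 * (G.card + 1) ≤ m + 1) (h : IsStandardBottomRow G) :
    IsStandardBottomRow (insert (m + 1) G) := by
  have hlt : ∀ a ∈ G, a < m + 1 := fun a ha => Nat.lt_succ_of_le (mem_Icc.1 (hG ha)).2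
  intro j hj
  rcases mem_insert.1 hj with rfl | hj
  · rw [filter_true_of_mem fun a ha => ?_, card_insert_of_notMem fun h => (hlt _ h).false]
    · exact hcard
    · rcases mem_insert.1 ha with rfl | ha
      exacts [le_rfl, (hlt a ha).le]
  · rw [filter_insert, if_neg (hlt j hj).not_ge]
    exact h j hj

def stdSpan (m d : ℕ) : Submodule ℚ (Finset ℕ →₀ ℚ) :=
  Submodule.span ℚ ((single · 1) '' {G | G ⊆ Icc 1 m ∧ G.card = d ∧ IsStandardBottomRow G} ∪
    (fun T => up m (single T 1)) '' {T | T ⊆ Icc 1 m ∧ T.card + 1 = d})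

lemma map_up_level_le_stdSpan : (level m l).map (up m) ≤ stdSpan m (l + 1) := by
  rw [level, Submodule.map_span, Set.image_image]
  refine Submodule.span_mono (Set.subset_union_of_subset_right (Set.image_mono ?_) _)
  exact fun T ⟨hT, hcard⟩ => ⟨hT, congrArg (· + 1) hcard⟩

lemma up_succ_single {T : Finset ℕ} (hT : T ⊆ Icc 1 m) :
    up (m + 1) (single T 1) = single (insert (m + 1) T) 1 + up m (single T 1) := by
  have : Icc 1 (m + 1) \ T = insert (m + 1) (Icc 1 m \ T) := by
    rw [← insert_Icc_right_eq_Icc_add_one (by omega), insert_sdiff_of_notMem]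
    exact fun h => by simpa using hT h
  rw [up_single, up_single, this, sum_insert (by simp)]

lemma mapDomain_insert_up_single (T : Finset ℕ) :
    mapDomain (insert (m + 1)) (up m (single T 1)) =
      up (m + 1) (single (insert (m + 1) T) 1) := by
  have : Icc 1 (m + 1) \ insert (m + 1) T = Icc 1 m \ T := by
    rw [← insert_Icc_right_eq_Icc_add_one (by omega), insert_sdiff_insert,
      sdiff_insert_of_notMem (by simp)]
  rw [up_single, up_single, this, mapDomain_finsetSum]
  exact sum_congr rfl fun i _ => by rw [mapDomain_single, insert_comm]

lemma map_insert_stdSpan_le {d : ℕ} (h : 2 * d + 1 ≤ m) :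
    (stdSpan m d).map (lmapDomain ℚ ℚ (insert (m + 1))) ≤ stdSpan (m + 1) (d + 1) := by
  have hlast : ∀ {A}, A ⊆ Icc 1 m → m + 1 ∉ A := fun hA h => by simpa using hA h
  have hsub : ∀ {A}, A ⊆ Icc 1 m → insert (m + 1) A ⊆ Icc 1 (m + 1) := fun hA =>
    insert_subset (by simp) (hA.trans (Icc_subset_Icc_right m.le_succ))
  rw [stdSpan, Submodule.map_span_le]
  rintro _ (⟨G, ⟨hG, hcard, hstd⟩, rfl⟩ | ⟨T, ⟨hT, hcard⟩, rfl⟩)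
  · refine Submodule.subset_span
      (Or.inl ⟨_, ⟨hsub hG, ?_, hstd.insert_succ hG (by omega)⟩, by simp⟩)
    rw [card_insert_of_notMem (hlast hG), hcard]
  · refine Submodule.subset_span (Or.inr ⟨_, ⟨hsub hT, ?_⟩, by simp [mapDomain_insert_up_single]⟩)
    rw [card_insert_of_notMem (hlast hT), hcard]

lemma stdSpan_le_stdSpan_succ {d : ℕ} (hinsert : ∀ T ⊆ Icc 1 m, T.card + 1 = d →
      single (insert (m + 1) T) 1 ∈ stdSpan (m + 1) d) :
    stdSpan m d ≤ stdSpan (m + 1) d := by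
  have hIcc := Icc_subset_Icc_right (a := 1) m.le_succ
  refine Submodule.span_le.2 ?_
  rintro _ (⟨G, ⟨hG, hcard, hstd⟩, rfl⟩ | ⟨T, ⟨hT, hcard⟩, rfl⟩)
  · exact Submodule.subset_span (Or.inl ⟨G, ⟨hG.trans hIcc, hcard, hstd⟩, rfl⟩)
  · have hup : up (m + 1) (single T 1) ∈ stdSpan (m + 1) d :=
      Submodule.subset_span (Or.inr ⟨T, ⟨hT.trans hIcc, hcard⟩, rfl⟩)
    have := Submodule.sub_mem _ hup (hinsert T hT hcard)
    rwa [up_succ_single hT, add_sub_cancel_left] at this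

theorem single_mem_stdSpan {S : Finset ℕ} (hS : S ⊆ Icc 1 m) (h : 2 * S.card ≤ m) :
    single S 1 ∈ stdSpan m S.card := by
  induction m generalizing S with
  | zero =>
    obtain rfl : S = ∅ := card_eq_zero.1 (by omega)
    exact Submodule.subset_span
      (Or.inl ⟨∅, ⟨empty_subset _, rfl, by simp [IsStandardBottomRow]⟩, rfl⟩)
  | succ m ih =>
    have hinsert : ∀ T ⊆ Icc 1 m, 2 * T.card + 1 ≤ m →
        single (insert (m + 1) T) 1 ∈ stdSpan (m + 1) (T.card + 1) := fun T hT hcard =>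
      map_insert_stdSpan_le hcard ⟨_, ih hT (by omega), by simp⟩
    rw [← insert_Icc_right_eq_Icc_add_one (by omega)] at hS
    by_cases hmem : m + 1 ∈ S
    · have hpos : 0 < S.card := card_pos.2 ⟨_, hmem⟩
      have := hinsert _ (subset_insert_iff.1 hS) (by rw [card_erase_of_mem hmem]; omega)
      rwa [insert_erase hmem, card_erase_of_mem hmem, Nat.sub_add_cancel hpos] at this
    replace hS := (subset_insert_iff_of_notMem hmem).1 hS
    refine stdSpan_le_stdSpan_succ (fun T hT hcard => hcard ▸ hinsert T hT (by omega)) ?_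
    rcases le_or_gt (2 * S.card) m with h' | h'
    · exact ih hS h'
    · obtain ⟨l, hl⟩ : ∃ l, S.card = l + 1 := ⟨S.card - 1, by omega⟩
      rw [hl] at h' ⊢
      exact map_up_level_le_stdSpan (level_le_map_up h' (Submodule.subset_span ⟨S, ⟨hS, hl⟩, rfl⟩))

end

end BooleanLattice

namespace TableauQuotient

open BooleanLattice
open MvPolynomial (C X)

noncomputable section

abbrev polyModule (n k : ℕ) : Module (Polynomial ℚ) (MvPolynomial (Fin (n + 1)) ℚ ⧸ Iid n k) :=
  Module.compHom _ (Polynomial.aeval (Ideal.Quotient.mk (Iid n k) (tP n))).toRingHom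

attribute [local instance] polyModule

def tableauSpan (n k : ℕ) : Submodule (Polynomial ℚ) (MvPolynomial (Fin (n + 1)) ℚ ⧸ Iid n k) :=
  Submodule.span (Polynomial ℚ)
    {q | ∃ S : Finset ℕ, goodS n k S ∧ q = Ideal.Quotient.mk (Iid n k) (∏ j ∈ S, xP n j)}

def xMon (n : ℕ) (M : Multiset ℕ) : MvPolynomial (Fin (n + 1)) ℚ := (M.map (xP n)).prod

variable {n k : ℕ}

local notation "π" => Ideal.Quotient.mk (Iid n k)

lemma xMon_cons (i : ℕ) (M : Multiset ℕ) : xMon n (i ::ₘ M) = xP n i * xMon n M := by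
  simp [xMon]

lemma xP_eq_zero {i : ℕ} (h : ¬(1 ≤ i ∧ i ≤ n)) : xP n i = 0 := dif_neg h

lemma polynomial_smul_eq (p : Polynomial ℚ) (q : MvPolynomial (Fin (n + 1)) ℚ ⧸ Iid n k) :
    p • q = Polynomial.aeval (π (tP n)) p * q := rfl

lemma mk_C (c : ℚ) : π (C c) = algebraMap ℚ (MvPolynomial (Fin (n + 1)) ℚ ⧸ Iid n k) c := by
  rw [← MvPolynomial.algebraMap_eq, Ideal.Quotient.mk_algebraMap]

lemma tP_mul_mem {q} (hq : q ∈ tableauSpan n k) : π (tP n) * q ∈ tableauSpan n k := by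
  simpa [polynomial_smul_eq] using (tableauSpan n k).smul_mem Polynomial.X hq

lemma C_mul_mem (c : ℚ) {q} (hq : q ∈ tableauSpan n k) : π (C c) * q ∈ tableauSpan n k := by
  simpa [polynomial_smul_eq, mk_C] using (tableauSpan n k).smul_mem (Polynomial.C c) hq

lemma rat_smul_mem (c : ℚ) {q} (hq : q ∈ tableauSpan n k) : c • q ∈ tableauSpan n k := by
  rw [Algebra.smul_def c q, ← mk_C]
  exact C_mul_mem c hq

lemma xP_mul_self_sub_mem {i : ℕ} (hi : 1 ≤ i) (hin : i ≤ n) :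
    xP n i * xP n i - (xP n (i - 1) * xP n (i - 1) + tP n * (C (1 + (n - k + i : ℚ)) * xP n i +
      C (1 - (n - k + i : ℚ)) * xP n (i - 1) - C (n - k + i : ℚ) * tP n)) ∈ Iid n k := by
  have hgen : (xP n i + xP n (i - 1) - C ((n : ℚ) - k + i) * tP n) *
      (xP n i - xP n (i - 1) - tP n) ∈ Iid n k :=
    Ideal.subset_span (Or.inl (Or.inr ⟨i, hi, hin, rfl⟩))
  convert hgen using 1
  simp only [map_add, map_one, map_sub]
  ring

lemma mk_xMon_cons_cons_mem {M : Multiset ℕ}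
    (ih : ∀ M' : Multiset ℕ, M'.card ≤ M.card + 1 → π (xMon n M') ∈ tableauSpan n k) (i : ℕ) :
    π (xMon n (i ::ₘ i ::ₘ M)) ∈ tableauSpan n k := by
  induction i with
  | zero => simp [xMon_cons, xP_eq_zero]
  | succ i IH =>
    by_cases hin : i + 1 ≤ n
    swap
    · simp [xMon_cons, xP_eq_zero, hin]
    set a : ℚ := n - k + (i + 1 : ℕ)
    have hrel : π (xMon n ((i + 1) ::ₘ (i + 1) ::ₘ M)) = π (xMon n (i ::ₘ i ::ₘ M)) +
        π (tP n) * (π (C (1 + a)) * π (xMon n ((i + 1) ::ₘ M)) +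
          π (C (1 - a)) * π (xMon n (i ::ₘ M)) - π (C a) * (π (tP n) * π (xMon n M))) := by
      simp only [← map_mul, ← map_add, ← map_sub]
      refine Ideal.Quotient.eq.2 ?_
      convert Ideal.mul_mem_right (xMon n M) _
        (xP_mul_self_sub_mem (k := k) (i := i + 1) (by omega) hin) using 1
      simp only [xMon_cons, a, Nat.add_sub_cancel]
      ring
    rw [hrel]
    refine add_mem IH (tP_mul_mem (sub_mem (add_mem ?_ ?_) (C_mul_mem _ (tP_mul_mem ?_))))
    · exact C_mul_mem _ (ih _ (by simp))
    · exact C_mul_mem _ (ih _ (by simp))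
    · exact ih _ (by simp)

-- Substituting `x_{y j} - c j • t` for the factors `x_{y j}` of a monomial of degree `D` only adds
-- `t` times terms of degree `< D`.
lemma prod_mul_sub_mem {ι : Type*} {D : ℕ}
    (ih : ∀ M : Multiset ℕ, M.card < D → π (xMon n M) ∈ tableauSpan n k)
    (s : Finset ι) (y : ι → ℕ) (c : ι → ℚ) (M : Multiset ℕ) (hD : s.card + M.card ≤ D) :
    π ((∏ j ∈ s, (xP n (y j) - C (c j) * tP n)) * xMon n M) - π (xMon n (s.val.map y + M)) ∈
      tableauSpan n k := by
  classical
  induction s using Finset.induction_on generalizing M with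
  | empty => simp
  | insert a s ha IH =>
    rw [card_insert_of_notMem ha] at hD
    have hshift := IH (y a ::ₘ M) (by simp; omega)
    have hlower := add_mem (IH M (by omega)) (ih (s.val.map y + M) (by simp; omega))
    have : π ((∏ j ∈ insert a s, (xP n (y j) - C (c j) * tP n)) * xMon n M) -
          π (xMon n ((insert a s).val.map y + M)) =
        (π ((∏ j ∈ s, (xP n (y j) - C (c j) * tP n)) * xMon n (y a ::ₘ M)) -
          π (xMon n (s.val.map y + y a ::ₘ M))) -
        π (C (c a)) * (π (tP n) * (π ((∏ j ∈ s, (xP n (y j) - C (c j) * tP n)) * xMon n M) -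
          π (xMon n (s.val.map y + M)) + π (xMon n (s.val.map y + M)))) := by
      rw [prod_insert ha, insert_val_of_notMem ha, Multiset.map_cons, Multiset.cons_add,
        Multiset.add_cons, xMon_cons, xMon_cons]
      simp only [map_mul, map_sub]
      ring
    rw [this]
    exact sub_mem hshift (C_mul_mem _ (tP_mul_mem hlower))

lemma mk_xMon_mem_of_lt_card {S : Finset ℕ} (hS : S ⊆ Icc 1 n) (hk : k < S.card)
    (ih : ∀ M : Multiset ℕ, M.card < S.card → π (xMon n M) ∈ tableauSpan n k) :
    π (xMon n S.val) ∈ tableauSpan n k := by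
  obtain ⟨S₀, hS₀, hcard⟩ := exists_subset_card_eq (show k + 1 ≤ S.card from hk)
  set m := S₀.orderEmbOfFin hcard
  have hm : ∀ j, m j ∈ Icc 1 n := fun j => hS (hS₀ (orderEmbOfFin_mem _ _ _))
  have hrel : π (∏ j, (xP n (m j) - C ((m j : ℚ) - (j : ℕ)) * tP n)) = 0 :=
    Ideal.Quotient.eq_zero_iff_mem.2 <| Ideal.subset_span <| Or.inr
      ⟨m, m.strictMono, (mem_Icc.1 (hm 0)).1, (mem_Icc.1 (hm (Fin.last k))).2, rfl⟩
  have hval : univ.val.map m + (S \ S₀).val = S.val := by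
    have h₀ : univ.val.map m = S₀.val := congrArg val (map_orderEmbOfFin_univ S₀ hcard)
    rw [h₀, sdiff_val, add_tsub_cancel_of_le (val_le_iff.2 hS₀)]
  have := prod_mul_sub_mem ih univ m (fun j => (m j : ℚ) - (j : ℕ)) (S \ S₀).val
    (by rw [card_univ, Fintype.card_fin, card_val, card_sdiff_of_subset hS₀]; omega)
  rwa [map_mul, hrel, zero_mul, zero_sub, neg_mem_iff, hval] at this

lemma linearCombination_up_single {T : Finset ℕ} (hT : T ⊆ Icc 1 n) :
    linearCombination ℚ (fun A : Finset ℕ => π (xMon n A.val)) (up n (single T 1)) =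
      π (C ((n : ℚ) * (n + 1) / 2)) * (π (tP n) * π (xMon n T.val)) -
        ∑ i ∈ T, π (xMon n (i ::ₘ i ::ₘ (T.erase i).val)) := by
  have hsum : π (∑ i ∈ Icc 1 n, xP n i) = π (C ((n : ℚ) * (n + 1) / 2) * tP n) :=
    Ideal.Quotient.eq.2 (Ideal.subset_span (Or.inl (Or.inl rfl)))
  have hcons : ∀ i ∈ T, i ::ₘ (T.erase i).val = T.val := fun i hi => by
    rw [erase_val, Multiset.cons_erase (mem_def.1 hi)]
  rw [up_single, map_sum]
  simp only [linearCombination_single, one_smul]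
  rw [sum_congr rfl fun i hi => by rw [insert_val_of_notMem (mem_sdiff.1 hi).2, xMon_cons, map_mul],
    ← Finset.sum_mul, sum_sdiff_eq_sub hT, ← map_sum, hsum, sub_mul, map_mul, mul_assoc,
    Finset.sum_mul]
  congr 1
  exact sum_congr rfl fun i hi => by rw [xMon_cons, hcons i hi, map_mul]

lemma mk_xMon_mem_of_card_le (h2k : 2 * k ≤ n) {S : Finset ℕ} (hS : S ⊆ Icc 1 n)
    (hk : S.card ≤ k) (ih : ∀ M : Multiset ℕ, M.card < S.card → π (xMon n M) ∈ tableauSpan n k) :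
    π (xMon n S.val) ∈ tableauSpan n k := by
  let Ψ := linearCombination ℚ fun A : Finset ℕ => π (xMon n A.val)
  suffices ∀ v ∈ stdSpan n S.card, Ψ v ∈ tableauSpan n k by
    simpa [Ψ] using this _ (single_mem_stdSpan hS (by omega))
  intro v hv
  induction hv using Submodule.span_induction with
  | mem v hv =>
    rcases hv with ⟨G, ⟨hG, hcard, hstd⟩, rfl⟩ | ⟨T, ⟨hT, hcard⟩, rfl⟩
    · have : π (xMon n G.val) ∈ tableauSpan n k :=
        Submodule.subset_span ⟨G, ⟨hG, hcard ▸ hk, hstd⟩, rfl⟩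
      simpa [Ψ] using this
    · rw [linearCombination_up_single hT]
      refine sub_mem (C_mul_mem _ (tP_mul_mem (ih _ (by simp; omega))))
        (sum_mem fun i hi => mk_xMon_cons_cons_mem (fun M hM => ih M ?_) i)
      rw [card_val, card_erase_of_mem hi] at hM
      have := card_pos.2 ⟨i, hi⟩
      omega
  | zero => simp
  | add v w _ _ hv hw => rw [map_add]; exact add_mem hv hw
  | smul c v _ hv => rw [map_smul]; exact rat_smul_mem c hv

theorem mk_xMon_mem (h2k : 2 * k ≤ n) (M : Multiset ℕ) : π (xMon n M) ∈ tableauSpan n k := by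
  have ih : ∀ M' : Multiset ℕ, M'.card < M.card → π (xMon n M') ∈ tableauSpan n k :=
    fun M' _ => mk_xMon_mem h2k M'
  by_cases hnd : M.Nodup
  swap
  · obtain ⟨i, M₀, rfl⟩ : ∃ i M₀, M = i ::ₘ i ::ₘ M₀ := by
      simpa [Multiset.nodup_iff_ne_cons_cons] using hnd
    exact mk_xMon_cons_cons_mem (fun M' h => ih M' (by simp; omega)) i
  by_cases hrange : ∀ i ∈ M, 1 ≤ i ∧ i ≤ n
  swap
  · obtain ⟨i, hi, hout⟩ := not_forall₂.1 hrange
    rw [xMon, Multiset.prod_eq_zero (Multiset.mem_map.2 ⟨i, hi, xP_eq_zero hout⟩), map_zero]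
    exact zero_mem _
  let S : Finset ℕ := ⟨M, hnd⟩
  have hS : S ⊆ Icc 1 n := fun i hi => mem_Icc.2 (hrange i hi)
  rcases le_or_gt S.card k with hk | hk
  · exact mk_xMon_mem_of_card_le h2k hS hk ih
  · exact mk_xMon_mem_of_lt_card hS hk ih
termination_by M.card

theorem mk_mem_tableauSpan (h2k : 2 * k ≤ n) (f : MvPolynomial (Fin (n + 1)) ℚ) :
    π f ∈ tableauSpan n k := by
  suffices ∀ M, π (f * xMon n M) ∈ tableauSpan n k by simpa [xMon] using this 0
  induction f using MvPolynomial.induction_on with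
  | C c => exact fun M => by rw [map_mul]; exact C_mul_mem c (mk_xMon_mem h2k M)
  | add p q hp hq => exact fun M => by rw [add_mul, map_add]; exact add_mem (hp M) (hq M)
  | mul_X p i hp =>
    intro M
    cases i using Fin.cases with
    | zero =>
      rw [show p * X 0 * xMon n M = tP n * (p * xMon n M) by rw [tP]; ring, map_mul]
      exact tP_mul_mem (hp M)
    | succ i =>
      have hX : X i.succ = xP n (i + 1) := by rw [xP, dif_pos ⟨by omega, i.isLt⟩]; rfl
      rw [mul_assoc, hX, ← xMon_cons]
      exact hp _

theorem tableauSpan_eq_top (h2k : 2 * k ≤ n) : tableauSpan n k = ⊤ :=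
  Submodule.eq_top_iff'.2 fun q => by
    obtain ⟨f, rfl⟩ := Ideal.Quotient.mk_surjective q
    exact mk_mem_tableauSpan h2k f

end

end TableauQuotient

/-- Proposition 4.1: the classes of the squarefree monomials `x_S`, for `S`
the bottom row of a standard tableau on `(n-ℓ,ℓ)` with `0 ≤ ℓ ≤ k`, generate
`ℚ[x₁,…,xₙ,t]/I` as a `ℚ[t]`-module (the `ℚ[t]`-module structure being induced
by `t ↦ t̄`). -/
theorem quotient_spanned_by_tableau_monomials (n k : ℕ) (h : 2 * k ≤ n) :
    letI : Module (Polynomial ℚ) (MvPolynomial (Fin (n + 1)) ℚ ⧸ Iid n k) :=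
      Module.compHom _
        (Polynomial.aeval (Ideal.Quotient.mk (Iid n k) (tP n))).toRingHom
    Submodule.span (Polynomial ℚ)
        {q : MvPolynomial (Fin (n + 1)) ℚ ⧸ Iid n k | ∃ S : Finset ℕ, goodS n k S ∧
          q = Ideal.Quotient.mk (Iid n k) (∏ j ∈ S, xP n j)} = ⊤ :=
  TableauQuotient.tableauSpan_eq_top h
end
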